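/- Let (σ₁,σ₂) be a local umbilic-free Legendre map in curvature line coordinates on U with ∂_uσ₁ ∈ span{σ₁} at every point (a channel surface with circular direction ∂_u), and let 𝔭 ∈ ℝ^6 satisfy ⟨σ₁(p),𝔭⟩ ≠ 0 for all p ∈ U. Set σ̃ := −(1/⟨σ₁,𝔭⟩)σ₁. Then ∂_uσ̃ = 0 and ⟨σ̃,𝔭⟩ = −1, and defining η̃_u := 0 and η̃_v := σ̃ ∧ ∂_vσ̃, for every t ∈ ℝ the map p(t) := 𝔭 + tσ̃ : U → ℝ^6 satisfies ∂_u(p(t)) + t η̃_u(p(t)) = 0 and ∂_v(p(t)) + t η̃_v(p(t)) = 0. That is, 𝔭 + tσ̃ is a linear conserved quantity: it is a parallel section of the connection d + tη̃ for every t, so the channel surface admits an Ω₀-structure with a linear conserved quantity. -/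

import Mathlib

noncomputable section

/-- `ℝ^{4,2}`: `ℝ^6` with a bilinear form of signature (4,2). -/
abbrev V6 : Type := Fin 6 → ℝ

/-- The symmetric bilinear form of signature (4,2) on `ℝ^6`. -/
def form (x y : V6) : ℝ :=
  x 0 * y 0 + x 1 * y 1 + x 2 * y 2 + x 3 * y 3 - x 4 * y 4 - x 5 * y 5

/-- Partial derivative in the first (`u`) coordinate. -/
def pu (σ : ℝ × ℝ → V6) (p : ℝ × ℝ) : V6 := fderiv ℝ σ p (1, 0)

/-- Partial derivative in the second (`v`) coordinate. -/
def pv (σ : ℝ × ℝ → V6) (p : ℝ × ℝ) : V6 := fderiv ℝ σ p (0, 1)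

/-- The contact plane `f = span{σ₁, σ₂}`. -/
def spanF (σ₁ σ₂ : ℝ × ℝ → V6) (p : ℝ × ℝ) : Submodule ℝ V6 :=
  Submodule.span ℝ {σ₁ p, σ₂ p}

/-- A local umbilic-free Legendre map in curvature line coordinates `(u,v)` on `U`,
given by lifts `σ₁, σ₂` of the two curvature sphere congruences, with curvature
directions `T₁ = ∂_u` (for `s₁ = span{σ₁}`) and `T₂ = ∂_v` (for `s₂ = span{σ₂}`). -/
structure IsLegendre (U : Set (ℝ × ℝ)) (σ₁ σ₂ : ℝ × ℝ → V6) : Prop where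
  open_U : IsOpen U
  smooth₁ : ContDiffOn ℝ (⊤ : ℕ∞) σ₁ U
  smooth₂ : ContDiffOn ℝ (⊤ : ℕ∞) σ₂ U
  indep : ∀ p ∈ U, LinearIndependent ℝ ![σ₁ p, σ₂ p]
  iso₁₁ : ∀ p ∈ U, form (σ₁ p) (σ₁ p) = 0
  iso₁₂ : ∀ p ∈ U, form (σ₁ p) (σ₂ p) = 0
  iso₂₂ : ∀ p ∈ U, form (σ₂ p) (σ₂ p) = 0
  contact_u : ∀ p ∈ U, form (pu σ₁ p) (σ₂ p) = 0
  contact_v : ∀ p ∈ U, form (pv σ₁ p) (σ₂ p) = 0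
  curv₁ : ∀ p ∈ U, pu σ₁ p ∈ spanF σ₁ σ₂ p
  curv₂ : ∀ p ∈ U, pv σ₂ p ∈ spanF σ₁ σ₂ p
  umb₁ : ∀ p ∈ U, pv σ₁ p ∉ spanF σ₁ σ₂ p
  umb₂ : ∀ p ∈ U, pu σ₂ p ∉ spanF σ₁ σ₂ p

/-- The wedge `a∧b`, acting as the skew endomorphism `x ↦ ⟨a,x⟩b − ⟨b,x⟩a`. -/
def wedge (a b x : V6) : V6 := form a x • b - form b x • a

def formCLM (y : V6) : V6 →L[ℝ] ℝ :=
  y 0 • ContinuousLinearMap.proj 0 + y 1 • ContinuousLinearMap.proj 1 +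
  y 2 • ContinuousLinearMap.proj 2 + y 3 • ContinuousLinearMap.proj 3 -
  y 4 • ContinuousLinearMap.proj 4 - y 5 • ContinuousLinearMap.proj 5

@[simp] lemma formCLM_apply (y x : V6) : formCLM y x = form x y := by
  simp [formCLM, form, ContinuousLinearMap.add_apply, ContinuousLinearMap.sub_apply,
    ContinuousLinearMap.smul_apply, ContinuousLinearMap.proj_apply]
  ring

lemma form_smul_left (a : ℝ) (x y : V6) : form (a • x) y = a * form x y := by
  simp [form, Pi.smul_apply, smul_eq_mul]; ring

lemma form_add_right (x y z : V6) : form x (y + z) = form x y + form x z := by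
  simp [form, Pi.add_apply]; ring

lemma form_smul_right (a : ℝ) (x y : V6) : form x (a • y) = a * form x y := by
  simp [form, Pi.smul_apply, smul_eq_mul]; ring

lemma form_comm (x y : V6) : form x y = form y x := by simp [form]; ring

lemma hasFDerivAt_form {σ τ : ℝ × ℝ → V6} {Dσ Dτ : (ℝ × ℝ) →L[ℝ] V6} {p : ℝ × ℝ}
    (hσ : HasFDerivAt σ Dσ p) (hτ : HasFDerivAt τ Dτ p) :
    HasFDerivAt (fun q => form (σ q) (τ q))
      ((formCLM (τ p)).comp Dσ + (formCLM (σ p)).comp Dτ) p := by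
  have hs : ∀ i, HasFDerivAt (fun q => σ q i) ((ContinuousLinearMap.proj i).comp Dσ) p :=
    fun i => (ContinuousLinearMap.proj (R := ℝ) (φ := fun _ : Fin 6 => ℝ) i).hasFDerivAt.comp p hσ
  have ht : ∀ i, HasFDerivAt (fun q => τ q i) ((ContinuousLinearMap.proj i).comp Dτ) p :=
    fun i => (ContinuousLinearMap.proj (R := ℝ) (φ := fun _ : Fin 6 => ℝ) i).hasFDerivAt.comp p hτ
  have H := ((((((hs 0).mul (ht 0)).add ((hs 1).mul (ht 1))).add ((hs 2).mul (ht 2))).add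
      ((hs 3).mul (ht 3))).sub ((hs 4).mul (ht 4))).sub ((hs 5).mul (ht 5))
  refine HasFDerivAt.congr_fderiv H ?_
  refine ContinuousLinearMap.ext fun w => ?_
  simp [formCLM, form, ContinuousLinearMap.add_apply, ContinuousLinearMap.sub_apply,
    ContinuousLinearMap.smul_apply, ContinuousLinearMap.comp_apply,
    ContinuousLinearMap.proj_apply]
  ring

/-- A channel surface admits an `Ω₀`-structure with a linear conserved quantity:
rescaling the circular curvature sphere lift by `σ̃ = −σ₁/⟨σ₁,𝔭⟩` gives `∂_uσ̃ = 0`,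
`⟨σ̃,𝔭⟩ = −1`, and `𝔭 + tσ̃` is a parallel section of `d + tη̃` for every `t`, where
`η̃_u = 0`, `η̃_v = σ̃ ∧ ∂_vσ̃`. -/
theorem channel_admits_linear_conserved_quantity
    (U : Set (ℝ × ℝ)) (σ₁ σ₂ : ℝ × ℝ → V6)
    (hL : IsLegendre U σ₁ σ₂)
    (hchan : ∀ p ∈ U, pu σ₁ p ∈ Submodule.span ℝ ({σ₁ p} : Set V6))
    (𝔭 : V6) (h𝔭 : ∀ p ∈ U, form (σ₁ p) 𝔭 ≠ 0) :
    ∀ p ∈ U,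
      pu (fun q => -(1 / form (σ₁ q) 𝔭) • σ₁ q) p = 0 ∧
      form (-(1 / form (σ₁ p) 𝔭) • σ₁ p) 𝔭 = -1 ∧
      ∀ t : ℝ,
        pu (fun q => 𝔭 + t • (-(1 / form (σ₁ q) 𝔭) • σ₁ q)) p
            + t • (0 : V6) = 0 ∧
        pv (fun q => 𝔭 + t • (-(1 / form (σ₁ q) 𝔭) • σ₁ q)) p
            + t • wedge (-(1 / form (σ₁ p) 𝔭) • σ₁ p)
                (pv (fun q => -(1 / form (σ₁ q) 𝔭) • σ₁ q) p)
                (𝔭 + t • (-(1 / form (σ₁ p) 𝔭) • σ₁ p)) = 0 := by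
  intro p hp
  simp only [one_div]
  have hgp : form (σ₁ p) 𝔭 ≠ 0 := h𝔭 p hp
  have hD : DifferentiableAt ℝ σ₁ p :=
    (hL.smooth₁.contDiffAt (hL.open_U.mem_nhds hp)).differentiableAt (by simp)
  set D : (ℝ × ℝ) →L[ℝ] V6 := fderiv ℝ σ₁ p with hDdef
  have hσ₁ : HasFDerivAt σ₁ D p := hD.hasFDerivAt
  -- derivative of g q = form (σ₁ q) 𝔭
  set G : (ℝ × ℝ) →L[ℝ] ℝ := (formCLM 𝔭).comp D with hGdef
  have hg : HasFDerivAt (fun q => form (σ₁ q) 𝔭) G p := by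
    simpa using hasFDerivAt_form hσ₁ (hasFDerivAt_const 𝔭 p)
  -- derivative of the scalar factor
  have hc : HasFDerivAt (fun q => -(form (σ₁ q) 𝔭)⁻¹)
      ((form (σ₁ p) 𝔭 ^ 2)⁻¹ • G) p := by
    have h := ((hasFDerivAt_inv' (𝕜 := ℝ) hgp).comp p hg).neg
    refine HasFDerivAt.congr_fderiv h ?_
    refine ContinuousLinearMap.ext fun w => ?_
    simp [ContinuousLinearMap.mulLeftRight_apply, ContinuousLinearMap.smul_apply,
      ContinuousLinearMap.comp_apply, ContinuousLinearMap.neg_apply, pow_two, mul_inv]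
    ring
  -- derivative of σ̃
  set E : (ℝ × ℝ) →L[ℝ] V6 :=
    (-(form (σ₁ p) 𝔭)⁻¹) • D + ((form (σ₁ p) 𝔭 ^ 2)⁻¹ • G).smulRight (σ₁ p) with hEdef
  have key : HasFDerivAt (fun q => -(form (σ₁ q) 𝔭)⁻¹ • σ₁ q) E p := hc.smul hσ₁
  -- channel condition
  obtain ⟨c, hcc⟩ := Submodule.mem_span_singleton.mp (hchan p hp)
  have hD10 : D (1, 0) = c • σ₁ p := hcc.symm
  have hE10 : E (1, 0) = 0 := by
    simp only [hEdef, ContinuousLinearMap.add_apply, ContinuousLinearMap.smul_apply,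
      ContinuousLinearMap.smulRight_apply, hGdef, ContinuousLinearMap.comp_apply,
      hD10, formCLM_apply, form_smul_left, smul_smul, smul_eq_mul]
    rw [← add_smul]
    have : -(form (σ₁ p) 𝔭)⁻¹ * c + (form (σ₁ p) 𝔭 ^ 2)⁻¹ * (c * form (σ₁ p) 𝔭) = 0 := by
      field_simp
      ring
    rw [this, zero_smul]
  -- ⟨σ̃, 𝔭⟩ = -1 on U
  have hm1 : ∀ q ∈ U, form (-(form (σ₁ q) 𝔭)⁻¹ • σ₁ q) 𝔭 = -1 := by
    intro q hq
    rw [form_smul_left, neg_mul, inv_mul_cancel₀ (h𝔭 q hq)]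
  -- ⟨σ̃, σ̃⟩ = 0 on U
  have hiso : ∀ q ∈ U, form (-(form (σ₁ q) 𝔭)⁻¹ • σ₁ q) (-(form (σ₁ q) 𝔭)⁻¹ • σ₁ q) = 0 := by
    intro q hq
    rw [form_smul_left, form_smul_right, hL.iso₁₁ q hq]
    ring
  -- derivative facts for E(0,1)
  have hEv := key.fderiv
  have hEu0 : pu (fun q => -(form (σ₁ q) 𝔭)⁻¹ • σ₁ q) p = 0 := by
    simp only [pu, hEv, hE10]
  -- form (E (0,1)) 𝔭 = 0
  have hw𝔭 : form (E (0, 1)) 𝔭 = 0 := by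
    have h1 : HasFDerivAt (fun q => form (-(form (σ₁ q) 𝔭)⁻¹ • σ₁ q) 𝔭)
        ((formCLM 𝔭).comp E) p := by
      simpa using hasFDerivAt_form key (hasFDerivAt_const 𝔭 p)
    have h2 : HasFDerivAt (fun q => form (-(form (σ₁ q) 𝔭)⁻¹ • σ₁ q) 𝔭)
        (0 : (ℝ × ℝ) →L[ℝ] ℝ) p := by
      refine (hasFDerivAt_const (-1 : ℝ) p).congr_of_eventuallyEq ?_
      exact Filter.eventuallyEq_of_mem (hL.open_U.mem_nhds hp) fun q hq => hm1 q hq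
    have := h1.unique h2
    have h3 := congrArg (fun (L : (ℝ × ℝ) →L[ℝ] ℝ) => L (0, 1)) this
    simpa using h3
  -- form (E (0,1)) (σ̃ p) = 0
  have hwσ : form (E (0, 1)) (-(form (σ₁ p) 𝔭)⁻¹ • σ₁ p) = 0 := by
    have h1 : HasFDerivAt
        (fun q => form (-(form (σ₁ q) 𝔭)⁻¹ • σ₁ q) (-(form (σ₁ q) 𝔭)⁻¹ • σ₁ q))
        ((formCLM (-(form (σ₁ p) 𝔭)⁻¹ • σ₁ p)).comp E +
          (formCLM (-(form (σ₁ p) 𝔭)⁻¹ • σ₁ p)).comp E) p := hasFDerivAt_form key key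
    have h2 : HasFDerivAt
        (fun q => form (-(form (σ₁ q) 𝔭)⁻¹ • σ₁ q) (-(form (σ₁ q) 𝔭)⁻¹ • σ₁ q))
        (0 : (ℝ × ℝ) →L[ℝ] ℝ) p := by
      refine (hasFDerivAt_const (0 : ℝ) p).congr_of_eventuallyEq ?_
      exact Filter.eventuallyEq_of_mem (hL.open_U.mem_nhds hp) fun q hq => hiso q hq
    have h4 := congrArg (fun (L : (ℝ × ℝ) →L[ℝ] ℝ) => L (0, 1)) (h1.unique h2)
    simp only [ContinuousLinearMap.add_apply, ContinuousLinearMap.comp_apply,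
      ContinuousLinearMap.zero_apply, formCLM_apply] at h4
    linarith
  refine ⟨hEu0, hm1 p hp, fun t => ?_⟩
  have hP : HasFDerivAt (fun q => 𝔭 + t • (-(form (σ₁ q) 𝔭)⁻¹ • σ₁ q)) (t • E) p :=
    (key.const_smul t).const_add 𝔭
  constructor
  · show fderiv ℝ (fun q => 𝔭 + t • (-(form (σ₁ q) 𝔭)⁻¹ • σ₁ q)) p (1, 0) + t • (0 : V6) = 0
    rw [hP.fderiv]
    simp [hE10]
  · show fderiv ℝ (fun q => 𝔭 + t • (-(form (σ₁ q) 𝔭)⁻¹ • σ₁ q)) p (0, 1)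
        + t • wedge (-(form (σ₁ p) 𝔭)⁻¹ • σ₁ p)
            (fderiv ℝ (fun q => -(form (σ₁ q) 𝔭)⁻¹ • σ₁ q) p (0, 1))
            (𝔭 + t • (-(form (σ₁ p) 𝔭)⁻¹ • σ₁ p)) = 0
    rw [hP.fderiv, hEv]
    have hA : form (-(form (σ₁ p) 𝔭)⁻¹ • σ₁ p)
        (𝔭 + t • (-(form (σ₁ p) 𝔭)⁻¹ • σ₁ p)) = -1 := by
      rw [form_add_right, form_smul_right, hm1 p hp, hiso p hp]; ring
    have hB : form (E (0, 1)) (𝔭 + t • (-(form (σ₁ p) 𝔭)⁻¹ • σ₁ p)) = 0 := by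
      rw [form_add_right, form_smul_right, hw𝔭, hwσ]; ring
    have hW : wedge (-(form (σ₁ p) 𝔭)⁻¹ • σ₁ p) (E (0, 1))
        (𝔭 + t • (-(form (σ₁ p) 𝔭)⁻¹ • σ₁ p)) = -E (0, 1) := by
      unfold wedge
      rw [hA, hB]
      simp
    rw [hW]
    simp [ContinuousLinearMap.smul_apply, smul_neg]
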